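/- arXiv:math/0011184 — 11 statements merged into one kernel-verified Lean document; each statement's English description precedes it below -/
import Mathlib

section
/- Let H be a Hilbert space and T a bounded operator on H. For every λ > ||T||, T can be written as λ(U₁ + U₂ + U₃) for three unitary operators U₁, U₂, U₃ on H. -/
/-!
If `‖a‖ < 1`, then `b = (1 + a) / 2` is an invertible contraction. Invertibility gives a polar
decomposition `b = w |b|` with `w` unitary, and the positive contraction `|b|` is the real part of
the unitary `u = |b| + i √(1 - |b|²)`. Hence `2 b = w u + w u⋆` and `a = w u + w u⋆ + (-1)`.
-/

open CFC
open scoped ComplexStarModule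

namespace CStarAlgebra

variable {A : Type*} [CStarAlgebra A]

section Ordered

variable [PartialOrder A] [StarOrderedRing A]

theorem _root_.IsSelfAdjoint.exists_mem_unitary_add_star_eq_two_smul {p : A} (hp : IsSelfAdjoint p)
    (hp_norm : ‖p‖ ≤ 1) :
    ∃ u ∈ unitary A, u + star u = (2 : ℝ) • p := by
  let u := selfAdjoint.unitarySelfAddISMul ⟨p, hp⟩ hp_norm
  refine ⟨u, u.2, ?_⟩
  have hre : (2 : ℝ)⁻¹ • ((u : A) + star (u : A)) = p := by
    rw [← realPart_apply_coe]
    exact congrArg Subtype.val (selfAdjoint.realPart_unitarySelfAddISMul ⟨p, hp⟩ hp_norm)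
  rw [← hre, smul_smul]
  norm_num

theorem _root_.IsUnit.exists_mem_unitary_mul_abs {b : A} (hb : IsUnit b) :
    ∃ w ∈ unitary A, b = w * CFC.abs b := by
  have habs : IsUnit (CFC.abs b) := by
    rw [← isUnit_pow_iff two_ne_zero, CFC.abs_sq]
    exact hb.star.mul hb
  obtain ⟨v, hv⟩ := habs
  have hv_sa : star (v : A) = v := hv ▸ (abs_nonneg b).isSelfAdjoint.star_eq
  have hvinv_sa : star (↑v⁻¹ : A) = ↑v⁻¹ := by
    rw [← Units.coe_star_inv, show star v = v from Units.ext hv_sa]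
  refine ⟨b * ↑v⁻¹, (hb.mul v⁻¹.isUnit).mem_unitary_of_star_mul_self ?_, ?_⟩
  · calc star (b * ↑v⁻¹) * (b * ↑v⁻¹) = ↑v⁻¹ * (star b * b) * ↑v⁻¹ := by
          rw [star_mul, hvinv_sa]; noncomm_ring
      _ = 1 := by rw [← abs_mul_abs, ← hv]; simp
  · rw [← hv, mul_assoc, v.inv_mul, mul_one]

theorem exists_mem_unitary_add_eq_two_smul_of_isUnit {b : A} (hb : IsUnit b) (hb_norm : ‖b‖ ≤ 1) :
    ∃ u ∈ unitary A, ∃ v ∈ unitary A, u + v = (2 : ℝ) • b := by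
  obtain ⟨w, hw, hwb⟩ := hb.exists_mem_unitary_mul_abs
  obtain ⟨u, hu, hsum⟩ :=
    (abs_nonneg b).isSelfAdjoint.exists_mem_unitary_add_star_eq_two_smul (by rwa [norm_abs])
  refine ⟨w * u, mul_mem hw hu, w * star u, mul_mem hw (Unitary.star_mem hu), ?_⟩
  rw [← mul_add, hsum, mul_smul_comm, ← hwb]

theorem exists_sum_three_unitary_of_norm_lt_one {a : A} (ha : ‖a‖ < 1) :
    ∃ u₁ ∈ unitary A, ∃ u₂ ∈ unitary A, ∃ u₃ ∈ unitary A, a = u₁ + u₂ + u₃ := by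
  nontriviality A
  set b : A := (2 : ℝ)⁻¹ • (1 + a)
  have hb : IsUnit b := by
    have : IsUnit (1 - -a) := isUnit_one_sub_of_norm_lt_one (by rwa [norm_neg])
    rw [sub_neg_eq_add] at this
    exact this.smul (Units.mk0 (2 : ℝ)⁻¹ (by norm_num))
  have hb_norm : ‖b‖ ≤ 1 := by
    calc ‖b‖ ≤ 2⁻¹ * (‖(1 : A)‖ + ‖a‖) := by
          rw [norm_smul, Real.norm_of_nonneg (by norm_num)]; gcongr; exact norm_add_le _ _
      _ ≤ 1 := by rw [norm_one]; linarith
  obtain ⟨u, hu, v, hv, huv⟩ := exists_mem_unitary_add_eq_two_smul_of_isUnit hb hb_norm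
  refine ⟨u, hu, v, hv, -1, (-1 : unitary A).2, ?_⟩
  rw [huv, smul_smul]
  norm_num

end Ordered

theorem exists_eq_smul_sum_three_unitary_of_norm_lt {x : A} {r : ℝ} (hx : ‖x‖ < r) :
    ∃ u₁ u₂ u₃ : A, u₁ ∈ unitary A ∧ u₂ ∈ unitary A ∧ u₃ ∈ unitary A ∧
      x = (r : ℂ) • (u₁ + u₂ + u₃) := by
  let _ := spectralOrder A
  let _ := spectralOrderedRing A
  have hr : 0 < r := (norm_nonneg x).trans_lt hx
  have hxr : ‖(r : ℂ)⁻¹ • x‖ < 1 := by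
    rw [norm_smul, norm_inv, Complex.norm_real, Real.norm_of_nonneg hr.le, inv_mul_lt_one₀ hr]
    exact hx
  obtain ⟨u₁, hu₁, u₂, hu₂, u₃, hu₃, hsum⟩ := exists_sum_three_unitary_of_norm_lt_one hxr
  refine ⟨u₁, u₂, u₃, hu₁, hu₂, hu₃, ?_⟩
  rw [← hsum, smul_smul, mul_inv_cancel₀ (by exact_mod_cast hr.ne'), one_smul]

end CStarAlgebra

/-- Every bounded operator `T` on a complex Hilbert space is, for every `λ > ‖T‖`,
of the form `λ (U₁ + U₂ + U₃)` with `U₁, U₂, U₃` unitary. -/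
theorem stmt0 {H : Type*} [NormedAddCommGroup H] [InnerProductSpace ℂ H] [CompleteSpace H]
    (T : H →L[ℂ] H) (lam : ℝ) (hlam : ‖T‖ < lam) :
    ∃ U₁ U₂ U₃ : H →L[ℂ] H, U₁ ∈ unitary (H →L[ℂ] H) ∧ U₂ ∈ unitary (H →L[ℂ] H) ∧
      U₃ ∈ unitary (H →L[ℂ] H) ∧ T = (lam : ℂ) • (U₁ + U₂ + U₃) :=
  CStarAlgebra.exists_eq_smul_sum_three_unitary_of_norm_lt hlam
end

section
/- Let H be a Hilbert space. If a surjective bounded operator T on H is a linear combination of two unitary operators, then T is invertible. -/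
/-!
Expanding `T = λ U₁ + μ U₂` gives `T T⋆ U₁ = U₁ T⋆ T`, so `T T⋆` and `T⋆ T` are unitarily
equivalent. As `ker (T⋆ T) = ker T` and `ker (T T⋆) = ker T⋆`, the operator `T` is injective as
soon as `T⋆` is, and `T⋆` is injective because `T` is surjective. Hence `T` is bijective.
-/

open Function ContinuousLinearMap

theorem Unitary.smul_add_smul_mul_star_mul_eq {R A : Type*} [CommSemiring R] [StarRing R]
    [Semiring A] [StarRing A] [Algebra R A] [StarModule R A] {U₁ U₂ : A} (hU₁ : U₁ ∈ unitary A)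
    (hU₂ : U₂ ∈ unitary A) (lam mu : R) :
    (lam • U₁ + mu • U₂) * star (lam • U₁ + mu • U₂) * U₁ =
      U₁ * (star (lam • U₁ + mu • U₂) * (lam • U₁ + mu • U₂)) := by
  have e₁ : U₁ * (star U₁ * U₂) = U₂ := by rw [← mul_assoc, hU₁.2, one_mul]
  have e₂ : U₂ * (star U₂ * U₁) = U₁ := by rw [← mul_assoc, hU₂.2, one_mul]
  simp only [star_add, star_smul, mul_add, add_mul, smul_mul_assoc, mul_smul_comm,
    mul_assoc, hU₁.1, hU₂.1, mul_one, e₁, e₂]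
  module

namespace ContinuousLinearMap

variable {𝕜 E F : Type*} [RCLike 𝕜] [NormedAddCommGroup E] [InnerProductSpace 𝕜 E]
  [CompleteSpace E] [NormedAddCommGroup F] [InnerProductSpace 𝕜 F] [CompleteSpace F]

theorem injective_adjoint_of_surjective {T : E →L[𝕜] F} (hT : Surjective T) :
    Injective (adjoint T) := by
  rw [← coe_coe, ← LinearMap.ker_eq_bot, ← orthogonal_range, LinearMap.range_eq_top.mpr hT,
    Submodule.top_orthogonal_eq_bot]

theorem injective_of_mul_star_mul_eq {T U : E →L[𝕜] E} (hU : Injective U)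
    (h : T * star T * U = U * (star T * T)) (hT : Injective ⇑(star T)) : Injective T := by
  have hTT : Injective (T * star T) := (self_comp_adjoint_injective_iff T).mpr hT
  have hUTT : Injective (U * (star T * T)) := by
    rw [← h]
    exact hTT.comp hU
  exact (adjoint_comp_self_injective_iff T).mp (Injective.of_comp hUTT)

end ContinuousLinearMap

/-- If a surjective bounded operator on a complex Hilbert space is a linear combination of
two unitary operators, then it is invertible. -/
theorem stmt5 {H : Type*} [NormedAddCommGroup H] [InnerProductSpace ℂ H] [CompleteSpace H]
    (T U₁ U₂ : H →L[ℂ] H) (hU₁ : U₁ ∈ unitary (H →L[ℂ] H)) (hU₂ : U₂ ∈ unitary (H →L[ℂ] H))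
    (lam mu : ℂ) (hT : T = lam • U₁ + mu • U₂) (hsurj : Function.Surjective T) :
    IsUnit T := by
  have hU₁_inj : Injective U₁ := (Unitary.linearIsometryEquiv ⟨U₁, hU₁⟩).injective
  have hconj : T * star T * U₁ = U₁ * (star T * T) :=
    hT ▸ Unitary.smul_add_smul_mul_star_mul_eq hU₁ hU₂ lam mu
  rw [isUnit_iff_bijective]
  exact ⟨injective_of_mul_star_mul_eq hU₁_inj hconj (injective_adjoint_of_surjective hsurj),
    hsurj⟩
end

section
/- The set of invertible bounded linear operators on a Hilbert space H is a closed subset of the set of surjective bounded linear operators on H (in the operator-norm topology of B(H)). -/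
/-!
If `T` is surjective, the open mapping theorem gives preimages `T x = y` with `‖x‖ ≤ C ‖y‖`.
For a unit `u` with `‖T - u‖ ≤ 1 / (2C)`, writing `u⁻¹ (T x) = x + u⁻¹ ((T - u) x)` bounds
`‖u⁻¹‖ ≤ 2C` uniformly. Hence units close enough to `T` satisfy `‖u⁻¹‖ ‖T - u‖ < 1`, and the
Neumann series makes `T` itself a unit.
-/

theorem Units.isUnit_of_norm_inv_mul_norm_sub_lt_one {R : Type*} [NormedRing R]
    [HasSummableGeomSeries R] (x : Rˣ) {y : R} (h : ‖(↑x⁻¹ : R)‖ * ‖y - x‖ < 1) : IsUnit y := by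
  nontriviality R
  have hpos : 0 < ‖(↑x⁻¹ : R)‖ := norm_pos_iff.mpr x⁻¹.ne_zero
  refine (x.ofNearby y ?_).isUnit
  simpa using (lt_inv_mul_iff₀ hpos (b := 1)).mpr (by simpa using h)

namespace ContinuousLinearMap

variable {𝕜 E : Type*} [NontriviallyNormedField 𝕜] [NormedAddCommGroup E] [NormedSpace 𝕜 E]

theorem norm_inv_le_two_mul_of_norm_sub_le {T : E →L[𝕜] E} {C : ℝ} (hC : 0 < C)
    (hpre : ∀ y, ∃ x, T x = y ∧ ‖x‖ ≤ C * ‖y‖) (u : (E →L[𝕜] E)ˣ)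
    (hu : ‖T - u‖ ≤ (2 * C)⁻¹) : ‖(↑u⁻¹ : E →L[𝕜] E)‖ ≤ 2 * C := by
  set V : E →L[𝕜] E := ↑u⁻¹
  have hVu (z : E) : V ((u : E →L[𝕜] E) z) = z := by
    rw [← mul_apply_eq_comp, u.inv_mul, one_apply_eq_self]
  have hV : ‖V‖ ≤ C + ‖V‖ / 2 := by
    refine opNorm_le_bound _ (by positivity) fun y ↦ ?_
    obtain ⟨x, rfl, hx⟩ := hpre y
    have hVT : V (T x) = x + V ((T - u) x) := by
      rw [sub_apply, map_sub, hVu, add_sub_cancel]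
    calc ‖V (T x)‖ ≤ ‖x‖ + ‖V‖ * (‖T - u‖ * ‖x‖) := by
          rw [hVT]
          exact (norm_add_le _ _).trans (by gcongr; exact V.le_opNorm_of_le (le_opNorm _ _))
      _ ≤ C * ‖T x‖ + ‖V‖ * ((2 * C)⁻¹ * (C * ‖T x‖)) := by gcongr
      _ = (C + ‖V‖ / 2) * ‖T x‖ := by field_simp
  linarith

theorem isUnit_of_surjective_of_mem_closure [CompleteSpace E] {T : E →L[𝕜] E}
    (hT : Function.Surjective T) (hcl : T ∈ closure {S : E →L[𝕜] E | IsUnit S}) :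
    IsUnit T := by
  obtain ⟨C, hC, hpre⟩ := exists_preimage_norm_le T hT
  obtain ⟨_, ⟨u, rfl⟩, hu⟩ := Metric.mem_closure_iff.mp hcl (2 * C)⁻¹ (by positivity)
  rw [dist_eq_norm] at hu
  refine u.isUnit_of_norm_inv_mul_norm_sub_lt_one ?_
  calc ‖(↑u⁻¹ : E →L[𝕜] E)‖ * ‖T - u‖ ≤ 2 * C * ‖T - u‖ := by
        gcongr
        exact norm_inv_le_two_mul_of_norm_sub_le hC hpre u hu.le
    _ < 2 * C * (2 * C)⁻¹ := by gcongr
    _ = 1 := by field_simp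

end ContinuousLinearMap

/-- The invertible bounded operators on a complex Hilbert space form a closed subset of the
set of surjective bounded operators (with its operator-norm subspace topology). -/
theorem stmt7 {H : Type*} [NormedAddCommGroup H] [InnerProductSpace ℂ H] [CompleteSpace H] :
    IsClosed {T : {S : H →L[ℂ] H // Function.Surjective S} | IsUnit T.1} :=
  isClosed_of_closure_subset fun T hT ↦ ContinuousLinearMap.isUnit_of_surjective_of_mem_closure
    T.2 (continuous_subtype_val.closure_preimage_subset {S | IsUnit S} hT)
end

section
/- Let H be a Hilbert space, K a closed subspace with orthogonal projection P, and {e_j} an orthonormal basis of H. Then the sequences f_j := e_j and g_j := P(e_j) - (1 - P)(e_j) = (2P - 1)(e_j) are both orthonormal bases of H, and P(e_j) = (1/2)(f_j + g_j) for every j. -/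
/-!
The symmetry `2P - 1` of a closed subspace is Mathlib's `Submodule.reflection`, a linear isometric
equivalence; transporting `e` along it gives the second Hilbert basis, and `P = (1 + (2P - 1)) / 2`.
-/

namespace HilbertBasis

variable {ι 𝕜 E E' : Type*} [RCLike 𝕜] [NormedAddCommGroup E] [InnerProductSpace 𝕜 E]
  [NormedAddCommGroup E'] [InnerProductSpace 𝕜 E']

protected noncomputable def map (b : HilbertBasis ι 𝕜 E) (L : E ≃ₗᵢ[𝕜] E') : HilbertBasis ι 𝕜 E' :=
  ⟨L.symm.trans b.repr⟩

@[simp]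
theorem map_apply (b : HilbertBasis ι 𝕜 E) (L : E ≃ₗᵢ[𝕜] E') (i : ι) :
    b.map L i = L (b i) := by
  classical
  rw [← b.repr_symm_single, ← (b.map L).repr_symm_single]
  rfl

end HilbertBasis

namespace Submodule

variable {𝕜 E : Type*} [RCLike 𝕜] [NormedAddCommGroup E] [InnerProductSpace 𝕜 E]
  (K : Submodule 𝕜 E) [K.HasOrthogonalProjection]

theorem coe_reflection_eq_two_smul_starProjection_sub_one :
    (K.reflection : E →L[𝕜] E) = 2 • K.starProjection - 1 :=
  rfl

theorem starProjection_eq_half_smul_add_reflection (x : E) :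
    K.starProjection x = (1 / 2 : 𝕜) • (x + K.reflection x) := by
  rw [reflection_apply, add_sub_cancel, ← Nat.cast_smul_eq_nsmul 𝕜, smul_smul]
  norm_num

end Submodule

theorem stmt8_general {H : Type*} [NormedAddCommGroup H] [InnerProductSpace ℂ H]
    (K : Submodule ℂ H) [CompleteSpace K] (e : HilbertBasis ℕ ℂ H) :
    ∃ f g : HilbertBasis ℕ ℂ H,
      (∀ j, f j = e j) ∧
      (∀ j, g j = ((2 • (K.subtypeL.comp K.orthogonalProjection) - 1 : H →L[ℂ] H) (e j))) ∧
      (∀ j, K.subtypeL.comp K.orthogonalProjection (e j) = (1 / 2 : ℂ) • (f j + g j)) := by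
  refine ⟨e, e.map K.reflection, fun j => rfl, fun j => ?_, fun j => ?_⟩
  · rw [e.map_apply]
    exact DFunLike.congr_fun K.coe_reflection_eq_two_smul_starProjection_sub_one (e j)
  · rw [e.map_apply]
    exact K.starProjection_eq_half_smul_add_reflection (e j)

/-- For a closed subspace `K` (with orthogonal projection `P`) of a Hilbert space and an
orthonormal basis `{e_j}`, the sequences `f_j := e_j` and `g_j := (2P - 1)(e_j)` are both
orthonormal bases and `P(e_j) = (1/2)(f_j + g_j)`. -/
theorem stmt8 {H : Type*} [NormedAddCommGroup H] [InnerProductSpace ℂ H] [CompleteSpace H]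
    (K : Submodule ℂ H) [CompleteSpace K] (e : HilbertBasis ℕ ℂ H) :
    ∃ f g : HilbertBasis ℕ ℂ H,
      (∀ j, f j = e j) ∧
      (∀ j, g j = ((2 • (K.subtypeL.comp K.orthogonalProjection) - 1 : H →L[ℂ] H) (e j))) ∧
      (∀ j, K.subtypeL.comp K.orthogonalProjection (e j) = (1 / 2 : ℂ) • (f j + g j)) :=
  stmt8_general K e
end

section
/- Let H be a Hilbert space and V : H → H a partial isometry (i.e., V is an isometry on (ker V)^⊥). If {e_j} is an orthonormal basis of H, then {V(e_j)} is a normalized tight frame for the closed range of V, i.e., Σ_j |⟨x, V e_j⟩|² = ||x||² for all x in the range of V. -/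
/-!
Write `x = V q` with `q ∈ (ker V)ᗮ`. By polarization `V` preserves inner products on `(ker V)ᗮ`,
and it kills `ker V`, so `⟪V q, V z⟫ = ⟪q, z⟫` for every `z`. Hence `⟪x, V e_j⟫ = ⟪q, e_j⟫`, and
Parseval for `q` together with `‖V q‖ = ‖q‖` gives the claim.
-/

open scoped InnerProductSpace

section
variable {𝕜 E F ι : Type*} [RCLike 𝕜] [NormedAddCommGroup E] [InnerProductSpace 𝕜 E]

theorem HilbertBasis.tsum_norm_inner_sq (b : HilbertBasis ι 𝕜 E) (x : E) :
    ∑' i, ‖⟪x, b i⟫_𝕜‖ ^ 2 = ‖x‖ ^ 2 := by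
  have h := lp.norm_rpow_eq_tsum (p := 2) (by norm_num) (b.repr x)
  simp only [LinearIsometryEquiv.norm_map, HilbertBasis.repr_apply_apply, norm_inner_symm] at h
  exact_mod_cast h.symm

variable [NormedAddCommGroup F] [InnerProductSpace 𝕜 F] [CompleteSpace E]

theorem ContinuousLinearMap.inner_map_map_of_mem_orthogonal_ker (V : E →L[𝕜] F)
    (hV : ∀ x ∈ (LinearMap.ker (V : E →ₗ[𝕜] F))ᗮ, ‖V x‖ = ‖x‖) {q : E}
    (hq : q ∈ (LinearMap.ker (V : E →ₗ[𝕜] F))ᗮ) (z : E) :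
    ⟪V q, V z⟫_𝕜 = ⟪q, z⟫_𝕜 := by
  set K := LinearMap.ker (V : E →ₗ[𝕜] F)
  let W : Kᗮ →ₗᵢ[𝕜] F := { V.toLinearMap.comp Kᗮ.subtype with norm_map' := fun a ↦ hV a a.2 }
  obtain ⟨u, hu, v, hv, rfl⟩ := K.exists_add_mem_mem_orthogonal z
  have hVu : V u = 0 := hu
  calc ⟪V q, V (u + v)⟫_𝕜 = ⟪W ⟨q, hq⟩, W ⟨v, hv⟩⟫_𝕜 := by rw [map_add, hVu, zero_add]; rfl
    _ = ⟪q, v⟫_𝕜 := W.inner_map_map _ _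
    _ = ⟪q, u + v⟫_𝕜 := by
      rw [inner_add_right, Submodule.inner_left_of_mem_orthogonal hu hq, zero_add]

end

/-- If `V` is a partial isometry (isometric on `(ker V)ᗮ`) on a Hilbert space and `{e_j}` is an
orthonormal basis, then `{V e_j}` is a normalized tight frame for the range of `V`:
`Σ_j |⟨x, V e_j⟩|² = ‖x‖²` for all `x` in the range of `V`. -/
theorem stmt9 {H : Type*} [NormedAddCommGroup H] [InnerProductSpace ℂ H] [CompleteSpace H]
    (V : H →L[ℂ] H) (hV : ∀ x ∈ (LinearMap.ker (V : H →ₗ[ℂ] H))ᗮ, ‖V x‖ = ‖x‖)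
    (e : HilbertBasis ℕ ℂ H) :
    ∀ x ∈ Set.range V, ∑' j, ‖⟪x, V (e j)⟫_ℂ‖ ^ 2 = ‖x‖ ^ 2 := by
  rintro x ⟨y, rfl⟩
  obtain ⟨u, hu, q, hq, rfl⟩ := (LinearMap.ker (V : H →ₗ[ℂ] H)).exists_add_mem_mem_orthogonal y
  have hVu : V u = 0 := hu
  rw [map_add, hVu, zero_add]
  simp_rw [V.inner_map_map_of_mem_orthogonal_ker hV hq]
  rw [e.tsum_norm_inner_sq, hV q hq]
end

section
/- Let {x_j} and {y_j} be normalized tight frames for Hilbert spaces H and K respectively, and suppose {x_j ⊕ y_j} is a normalized tight frame for the closed span of {x_j ⊕ y_j} in H ⊕ K. Then the closed linear span of {x_j ⊕ y_j} is all of H ⊕ K, and moreover Σ_j ⟨x, x_j⟩ y_j = 0 for every x ∈ H and Σ_j ⟨y, y_j⟩ x_j = 0 for every y ∈ K. -/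
open scoped InnerProductSpace

/-!
Let `M` be the closed span of `z_j = x_j ⊕ y_j` and `P` the orthogonal projection onto `M`.
Since every `z_j` lies in `M`, `⟨z_j, u⟩ = ⟨z_j, P u⟩`, so tightness on `M` gives
`Σ_j ⟨z_j, u⟩ z_j = P u` for every `u ∈ H ⊕ K`. For `u = v ⊕ 0` this reads
`Σ_j ⟨x_j, v⟩ (x_j ⊕ y_j) = P u`, and the first coordinate, by tightness of `{x_j}`, is `v`.
Hence `re ⟨P u, u⟩ = ‖v‖² = ‖u‖²`, i.e. `‖P u‖ = ‖u‖`, which forces `u ∈ M` and `P u = u`;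
the second coordinate then says `Σ_j ⟨x_j, v⟩ y_j = 0`. The same holds for `0 ⊕ w`, and these
vectors span `H ⊕ K`.
-/

namespace Submodule

variable {𝕜 E : Type*} [RCLike 𝕜] [NormedAddCommGroup E] [InnerProductSpace 𝕜 E]

theorem mem_of_inner_starProjection_self_eq (K : Submodule 𝕜 E) [K.HasOrthogonalProjection]
    {u : E} (h : ⟪K.starProjection u, u⟫_𝕜 = ⟪u, u⟫_𝕜) : u ∈ K := by
  have hsq : ‖K.starProjection u‖ ^ 2 = ‖u‖ ^ 2 := by
    rw [starProjection_apply, ← coe_norm, ← re_inner_starProjection_eq_normSq, h,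
      inner_self_eq_norm_sq]
  exact (K.mem_iff_norm_starProjection u).2 <| by
    simpa using (sq_eq_sq₀ (norm_nonneg _) (norm_nonneg _)).1 hsq

theorem hasSum_inner_smul_eq_starProjection (K : Submodule 𝕜 E) [K.HasOrthogonalProjection]
    {ι : Type*} {z : ι → E} (hzK : ∀ j, z j ∈ K)
    (htight : ∀ w ∈ K, HasSum (fun j => ⟪z j, w⟫_𝕜 • z j) w) (u : E) :
    HasSum (fun j => ⟪z j, u⟫_𝕜 • z j) (K.starProjection u) := by
  have hinner : ∀ j, ⟪z j, K.starProjection u⟫_𝕜 = ⟪z j, u⟫_𝕜 := fun j => by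
    rw [← inner_starProjection_left_eq_right, K.starProjection_eq_self_iff.2 (hzK j)]
  simpa only [hinner] using htight _ (K.starProjection_apply_mem u)

/-- `hadj` says `u = S† v`, without requiring `F` to be complete. -/
theorem mem_and_hasSum_of_tight_map {F : Type*} [NormedAddCommGroup F]
    [InnerProductSpace 𝕜 F] (K : Submodule 𝕜 E) [K.HasOrthogonalProjection]
    {ι : Type*} {z : ι → E} (hzK : ∀ j, z j ∈ K)
    (htight : ∀ w ∈ K, HasSum (fun j => ⟪z j, w⟫_𝕜 • z j) w)
    (S : E →L[𝕜] F) (hS : ∀ v, HasSum (fun j => ⟪S (z j), v⟫_𝕜 • S (z j)) v)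
    {u : E} {v : F} (hadj : ∀ w, ⟪w, u⟫_𝕜 = ⟪S w, v⟫_𝕜) (hSu : S u = v) :
    u ∈ K ∧ HasSum (fun j => ⟪S (z j), v⟫_𝕜 • z j) u := by
  have hsum : HasSum (fun j => ⟪S (z j), v⟫_𝕜 • z j) (K.starProjection u) := by
    simpa only [hadj] using K.hasSum_inner_smul_eq_starProjection hzK htight u
  have hSP : S (K.starProjection u) = v := by
    refine (hsum.mapL S).unique ?_
    simpa only [map_smul] using hS v
  have hu : u ∈ K := K.mem_of_inner_starProjection_self_eq <| by
    rw [hadj, hadj, hSP, hSu]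
  exact ⟨hu, K.starProjection_eq_self_iff.2 hu ▸ hsum⟩

end Submodule

/-- If `{x_j}` and `{y_j}` are normalized tight frames of `H` and `K` and the inner sum
`{x_j ⊕ y_j}` is a normalized tight frame for its closed linear span in `H ⊕ K`, then this
span is all of `H ⊕ K` and `Σ_j ⟨x, x_j⟩ y_j = 0`, `Σ_j ⟨y, y_j⟩ x_j = 0`. -/
theorem stmt10 {H K : Type*} [NormedAddCommGroup H] [InnerProductSpace ℂ H] [CompleteSpace H]
    [NormedAddCommGroup K] [InnerProductSpace ℂ K] [CompleteSpace K]
    (x : ℕ → H) (y : ℕ → K)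
    (hx : ∀ v : H, HasSum (fun j => ⟪x j, v⟫_ℂ • x j) v)
    (hy : ∀ w : K, HasSum (fun j => ⟪y j, w⟫_ℂ • y j) w)
    (z : ℕ → WithLp 2 (H × K))
    (hz : ∀ j, z j = (WithLp.equiv 2 (H × K)).symm (x j, y j))
    (htight : ∀ w ∈ (Submodule.span ℂ (Set.range z)).topologicalClosure,
      HasSum (fun j => ⟪z j, w⟫_ℂ • z j) w) :
    (Submodule.span ℂ (Set.range z)).topologicalClosure = ⊤ ∧
      (∀ v : H, HasSum (fun j => ⟪x j, v⟫_ℂ • y j) 0) ∧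
      (∀ w : K, HasSum (fun j => ⟪y j, w⟫_ℂ • x j) 0) := by
  set M := (Submodule.span ℂ (Set.range z)).topologicalClosure
  have hzM : ∀ j, z j ∈ M := fun j =>
    Submodule.le_topologicalClosure _ (Submodule.subset_span (Set.mem_range_self j))
  have hfst : ∀ j, WithLp.fstL 2 ℂ H K (z j) = x j := fun j => by simp [hz]
  have hsnd : ∀ j, WithLp.sndL 2 ℂ H K (z j) = y j := fun j => by simp [hz]
  have hH (v : H) := M.mem_and_hasSum_of_tight_map hzM htight (WithLp.fstL 2 ℂ H K)
    (by simpa only [hfst] using hx) (u := WithLp.toLp 2 (v, 0))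
    (fun w => by simp [WithLp.prod_inner_apply]) rfl
  have hK (w : K) := M.mem_and_hasSum_of_tight_map hzM htight (WithLp.sndL 2 ℂ H K)
    (by simpa only [hsnd] using hy) (u := WithLp.toLp 2 (0, w))
    (fun w => by simp [WithLp.prod_inner_apply]) rfl
  refine ⟨?_, fun v => ?_, fun w => ?_⟩
  · refine M.eq_top_iff'.2 fun u => ?_
    convert M.add_mem (hH u.fst).1 (hK u.snd).1
    exact WithLp.ofLp_injective 2 (by ext <;> simp)
  · simpa [hfst, hsnd] using (hH v).2.mapL (WithLp.sndL 2 ℂ H K)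
  · simpa [hfst, hsnd] using (hK w).2.mapL (WithLp.fstL 2 ℂ H K)
end

section
/- Let {x_j} and {y_j} be similar frames of Hilbert spaces H and K, i.e., there is a bounded invertible operator T : H → K with T(x_j) = y_j for all j. Then the closed linear span of {x_j ⊕ y_j} in H ⊕ K has a nontrivial orthogonal complement (provided H ≠ 0 and the frames are nonzero). -/
open scoped InnerProductSpace

/-- If `{x_j}` and `{y_j}` are similar frames (related by a bounded invertible operator `T`
with `T x_j = y_j`) of nonzero Hilbert spaces `H` and `K`, then the closed span of
`{x_j ⊕ y_j}` in `H ⊕ K` has a nontrivial orthogonal complement. -/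
theorem stmt11 {H K : Type*} [NormedAddCommGroup H] [InnerProductSpace ℂ H] [CompleteSpace H]
    [NormedAddCommGroup K] [InnerProductSpace ℂ K] [CompleteSpace K] [Nontrivial H]
    (x : ℕ → H) (y : ℕ → K) (C D C' D' : ℝ) (hC : 0 < C) (hC' : 0 < C')
    (hx : ∀ v : H, C * ‖v‖ ^ 2 ≤ ∑' j, ‖⟪v, x j⟫_ℂ‖ ^ 2 ∧
      ∑' j, ‖⟪v, x j⟫_ℂ‖ ^ 2 ≤ D * ‖v‖ ^ 2)
    (hy : ∀ w : K, C' * ‖w‖ ^ 2 ≤ ∑' j, ‖⟪w, y j⟫_ℂ‖ ^ 2 ∧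
      ∑' j, ‖⟪w, y j⟫_ℂ‖ ^ 2 ≤ D' * ‖w‖ ^ 2)
    (T : H ≃L[ℂ] K) (hT : ∀ j, T (x j) = y j) :
    (Submodule.span ℂ
        (Set.range (fun j => (WithLp.equiv 2 (H × K)).symm (x j, y j))))ᗮ ≠ ⊥ := by
  -- pick a nonzero element of K
  obtain ⟨h0, h0ne⟩ := exists_ne (0 : H)
  set k : K := T h0 with hk
  have hkne : k ≠ 0 := by
    simp only [hk]
    intro h
    exact h0ne (by simpa using congrArg T.symm h)
  -- the witness: (-(T† k), k)
  set z : WithLp 2 (H × K) :=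
    (WithLp.equiv 2 (H × K)).symm (-(ContinuousLinearMap.adjoint (T : H →L[ℂ] K) k), k) with hz
  have hzne : z ≠ 0 := by
    intro h
    apply hkne
    have := congrArg (fun w => (WithLp.equiv 2 (H × K) w).2) h
    simpa [hz] using this
  intro hbot
  apply hzne
  rw [← Submodule.mem_bot (R := ℂ), ← hbot]
  rw [Submodule.mem_orthogonal]
  intro u hu
  induction hu using Submodule.span_induction with
  | mem u hu =>
      obtain ⟨j, rfl⟩ := hu
      have : ⟪(fun j => (WithLp.equiv 2 (H × K)).symm (x j, y j)) j, z⟫_ℂ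
          = ⟪x j, -(ContinuousLinearMap.adjoint (T : H →L[ℂ] K) k)⟫_ℂ + ⟪y j, k⟫_ℂ := by
        simp [hz, WithLp.prod_inner_apply]
      rw [this, inner_neg_right, ContinuousLinearMap.adjoint_inner_right]
      simp [hT j]
  | zero => simp
  | add u v _ _ hu hv => rw [inner_add_left, hu, hv, add_zero]
  | smul c u _ hu => rw [inner_smul_left, hu, mul_zero]
end

section
/- Let {x_j} and {y_j} be normalized tight frames of Hilbert spaces H₁ and H₂, with frame transforms θ₁ : H₁ → ℓ² and θ₂ : H₂ → ℓ² (θᵢ(x) = (⟨x, x_j⟩)_j), and let P, Q be the orthogonal projections of ℓ² onto the ranges of θ₁, θ₂. If PQ = 0, then the inner sum {x_j ⊕ y_j} is a normalized tight frame of H₁ ⊕ H₂. -/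
open scoped InnerProductSpace

private lemma lp_norm_sq (h : lp (fun _ : ℕ => ℂ) 2) :
    ‖h‖ ^ 2 = ∑' j, ‖h j‖ ^ 2 := by
  have hp : (0:ℝ) < (2 : ENNReal).toReal := by norm_num
  have := lp.norm_rpow_eq_tsum hp h
  have h2 : (2 : ENNReal).toReal = (2:ℝ) := by norm_num
  rw [h2] at this
  calc ‖h‖ ^ 2 = ‖h‖ ^ (2:ℝ) := by
        rw [← Real.rpow_natCast]; norm_num
    _ = ∑' j, ‖h j‖ ^ (2:ℝ) := this
    _ = ∑' j, ‖h j‖ ^ 2 := by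
        refine tsum_congr fun j => ?_
        rw [← Real.rpow_natCast]; norm_num

/-- Let `{x_j}`, `{y_j}` be normalized tight frames of `H₁`, `H₂` with frame transforms
`θ₁, θ₂` into `ℓ²`, and let `P, Q` be the orthogonal projections onto the ranges of `θ₁, θ₂`.
If `PQ = 0`, then the inner sum `{x_j ⊕ y_j}` is a normalized tight frame of `H₁ ⊕ H₂`:
`Σ_j |⟨x, x_j⟩ + ⟨y, y_j⟩|² = ‖x‖² + ‖y‖²`. -/
theorem stmt12 {H₁ H₂ : Type*}
    [NormedAddCommGroup H₁] [InnerProductSpace ℂ H₁] [CompleteSpace H₁]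
    [NormedAddCommGroup H₂] [InnerProductSpace ℂ H₂] [CompleteSpace H₂]
    (x : ℕ → H₁) (y : ℕ → H₂)
    (hx : ∀ v : H₁, ∑' j, ‖⟪v, x j⟫_ℂ‖ ^ 2 = ‖v‖ ^ 2)
    (hy : ∀ w : H₂, ∑' j, ‖⟪w, y j⟫_ℂ‖ ^ 2 = ‖w‖ ^ 2)
    (θ₁ : H₁ →L[ℂ] lp (fun _ : ℕ => ℂ) 2) (hθ₁ : ∀ v j, θ₁ v j = ⟪x j, v⟫_ℂ)
    (θ₂ : H₂ →L[ℂ] lp (fun _ : ℕ => ℂ) 2) (hθ₂ : ∀ w j, θ₂ w j = ⟪y j, w⟫_ℂ)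
    (P Q : lp (fun _ : ℕ => ℂ) 2 →L[ℂ] lp (fun _ : ℕ => ℂ) 2)
    (hP_idem : IsIdempotentElem P) (hP_sa : IsSelfAdjoint P)
    (hP_ran : Set.range ⇑P = Set.range ⇑θ₁)
    (hQ_idem : IsIdempotentElem Q) (hQ_sa : IsSelfAdjoint Q)
    (hQ_ran : Set.range ⇑Q = Set.range ⇑θ₂)
    (hPQ : P ∘L Q = 0) :
    ∀ (v : H₁) (w : H₂),
      ∑' j, ‖⟪v, x j⟫_ℂ + ⟪w, y j⟫_ℂ‖ ^ 2 = ‖v‖ ^ 2 + ‖w‖ ^ 2 := by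
  intro v w
  set f := θ₁ v with hf
  set g := θ₂ w with hg
  have hPf : P f = f := by
    obtain ⟨u, hu⟩ : f ∈ Set.range ⇑P := hP_ran ▸ Set.mem_range_self v
    rw [← hu, ← ContinuousLinearMap.mul_apply, hP_idem]
  have hQg : Q g = g := by
    obtain ⟨u, hu⟩ : g ∈ Set.range ⇑Q := hQ_ran ▸ Set.mem_range_self w
    rw [← hu, ← ContinuousLinearMap.mul_apply, hQ_idem]
  have hPg : P g = 0 := by
    rw [← hQg, ← ContinuousLinearMap.comp_apply, hPQ]; rfl
  have horth : ⟪f, g⟫_ℂ = 0 := by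
    rw [← hPf, ← ContinuousLinearMap.adjoint_inner_right]
    rw [hP_sa.adjoint_eq, hPg, inner_zero_right]
  have hsum : ‖f + g‖ ^ 2 = ‖f‖ ^ 2 + ‖g‖ ^ 2 := by
    simp only [sq]
    exact norm_add_sq_eq_norm_sq_add_norm_sq_of_inner_eq_zero f g horth
  have hfv : ‖f‖ ^ 2 = ‖v‖ ^ 2 := by
    rw [lp_norm_sq, ← hx v]
    refine tsum_congr fun j => ?_
    rw [hf, hθ₁, ← inner_conj_symm, RCLike.norm_conj]
  have hgw : ‖g‖ ^ 2 = ‖w‖ ^ 2 := by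
    rw [lp_norm_sq, ← hy w]
    refine tsum_congr fun j => ?_
    rw [hg, hθ₂, ← inner_conj_symm, RCLike.norm_conj]
  calc ∑' j, ‖⟪v, x j⟫_ℂ + ⟪w, y j⟫_ℂ‖ ^ 2
      = ∑' j, ‖(f + g) j‖ ^ 2 := by
        refine tsum_congr fun j => ?_
        rw [lp.coeFn_add, Pi.add_apply, hf, hg, hθ₁, hθ₂, ← inner_conj_symm v,
          ← inner_conj_symm w, ← map_add, RCLike.norm_conj]
    _ = ‖f + g‖ ^ 2 := (lp_norm_sq _).symm
    _ = ‖v‖ ^ 2 + ‖w‖ ^ 2 := by rw [hsum, hfv, hgw]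
end

section
/- Let {x_j} and {y_j} be strongly disjoint normalized tight frames of Hilbert spaces H and K (i.e., {x_j ⊕ y_j} is a normalized tight frame of H ⊕ K). Then for any α, β ∈ ℂ with |α|² + |β|² = 1, and any isometric identifications, the sequence {αx_j + βy_j} (viewed via unitaries H ≅ K ≅ ℓ² when H = K = ℓ²) is a normalized tight frame; in particular when H = K, Σ_j |⟨z, αx_j + βy_j⟩|² = ||z||² for all z ∈ H. -/
/-! Expanding `‖⟪z, α x_j + β y_j⟫‖²` gives `‖α‖²‖⟪z, x_j⟫‖² + ‖β‖²‖⟪z, y_j⟫‖²` plus a cross term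
`2 Re (conj α β ⟪x_j, z⟫⟪z, y_j⟫)`. The first two sum to `(‖α‖² + ‖β‖²)‖z‖²`, and the cross terms
sum to `2 Re (conj α β ⟪z, ∑ ⟪x_j, z⟫ y_j⟫) = 0` by strong disjointness. -/

open scoped InnerProductSpace ComplexConjugate

section

variable {𝕜 E ι : Type*} [RCLike 𝕜] [NormedAddCommGroup E] [InnerProductSpace 𝕜 E]

theorem hasSum_norm_inner_sq_of_tsum_eq {w : ι → E}
    (hw : ∀ v : E, ∑' j, ‖⟪v, w j⟫_𝕜‖ ^ 2 = ‖v‖ ^ 2) (v : E) :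
    HasSum (fun j => ‖⟪v, w j⟫_𝕜‖ ^ 2) (‖v‖ ^ 2) := by
  rcases eq_or_ne v 0 with rfl | hv
  · simp
  · have hsum : Summable (fun j => ‖⟪v, w j⟫_𝕜‖ ^ 2) := by
      by_contra h
      have := tsum_eq_zero_of_not_summable h
      rw [hw v] at this
      exact pow_ne_zero 2 (norm_ne_zero_iff.mpr hv) this
    exact hw v ▸ hsum.hasSum

theorem hasSum_conj_inner_mul_inner {x y : ι → E} {v s : E}
    (h : HasSum (fun j => ⟪x j, v⟫_𝕜 • y j) s) :
    HasSum (fun j => conj ⟪v, x j⟫_𝕜 * ⟪v, y j⟫_𝕜) ⟪v, s⟫_𝕜 := by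
  simpa [inner_smul_right, inner_conj_symm] using h.mapL (innerSL 𝕜 v)

end

theorem RCLike.norm_mul_add_mul_sq {𝕜 : Type*} [RCLike 𝕜] (α β a b : 𝕜) :
    ‖α * a + β * b‖ ^ 2 =
      ‖α‖ ^ 2 * ‖a‖ ^ 2 + 2 * RCLike.re (conj α * β * (conj a * b)) + ‖β‖ ^ 2 * ‖b‖ ^ 2 := by
  rw [@norm_add_sq 𝕜, RCLike.inner_apply', norm_mul, norm_mul, mul_pow, mul_pow,
    map_mul (starRingEnd 𝕜)]
  ring_nf

theorem stmt14_general {H : Type*} [NormedAddCommGroup H] [InnerProductSpace ℂ H]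
    (x y : ℕ → H)
    (hx : ∀ v : H, ∑' j, ‖⟪v, x j⟫_ℂ‖ ^ 2 = ‖v‖ ^ 2)
    (hy : ∀ v : H, ∑' j, ‖⟪v, y j⟫_ℂ‖ ^ 2 = ‖v‖ ^ 2)
    (hd1 : ∀ v : H, HasSum (fun j => ⟪x j, v⟫_ℂ • y j) 0)
    (α β : ℂ) (hαβ : ‖α‖ ^ 2 + ‖β‖ ^ 2 = 1) :
    ∀ z : H, ∑' j, ‖⟪z, α • x j + β • y j⟫_ℂ‖ ^ 2 = ‖z‖ ^ 2 := by
  intro z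
  have hcross := (hasSum_conj_inner_mul_inner (hd1 z)).mul_left (conj α * β)
  rw [inner_zero_right, mul_zero] at hcross
  have hsum := ((hasSum_norm_inner_sq_of_tsum_eq hx z).mul_left (‖α‖ ^ 2)).add <|
    ((hcross.mapL RCLike.reCLM).mul_left 2).add
      ((hasSum_norm_inner_sq_of_tsum_eq hy z).mul_left (‖β‖ ^ 2))
  simp only [RCLike.reCLM_apply, map_zero, mul_zero, zero_add, ← add_mul, hαβ, one_mul] at hsum
  refine (hsum.congr_fun fun j => ?_).tsum_eq
  simp only [inner_add_right, inner_smul_right, RCLike.norm_mul_add_mul_sq]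
  ring

/-- If `{x_j}` and `{y_j}` are strongly disjoint normalized tight frames of a Hilbert space
`H` and `|α|² + |β|² = 1`, then `{α x_j + β y_j}` is a normalized tight frame of `H`. -/
theorem stmt14 {H : Type*} [NormedAddCommGroup H] [InnerProductSpace ℂ H] [CompleteSpace H]
    (x y : ℕ → H)
    (hx : ∀ v : H, ∑' j, ‖⟪v, x j⟫_ℂ‖ ^ 2 = ‖v‖ ^ 2)
    (hy : ∀ v : H, ∑' j, ‖⟪v, y j⟫_ℂ‖ ^ 2 = ‖v‖ ^ 2)
    (hd1 : ∀ v : H, HasSum (fun j => ⟪x j, v⟫_ℂ • y j) 0)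
    (hd2 : ∀ v : H, HasSum (fun j => ⟪y j, v⟫_ℂ • x j) 0)
    (α β : ℂ) (hαβ : ‖α‖ ^ 2 + ‖β‖ ^ 2 = 1) :
    ∀ z : H, ∑' j, ‖⟪z, α • x j + β • y j⟫_ℂ‖ ^ 2 = ‖z‖ ^ 2 :=
  stmt14_general x y hx hy hd1 α β hαβ
end

section
/- Let H be a separable Hilbert space and {f_j} a frame of H with frame transform θ : H → ℓ², θ(x) = (⟨x, f_j⟩)_j. Then θ* : ℓ² → H is surjective, and consequently {f_j} is a multiple of the sum of two normalized tight frames: there exist partial isometries W₁, W₂ on ℓ² (composed with the identification) and a constant c > 0 such that f_j = c(W₁(e_j)-part + W₂(e_j)-part), i.e., f_j = c(g_j + h_j) where {g_j} and {h_j} are normalized tight frames of H. -/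
/-!
The frame operator `S = θ*θ` satisfies `C ≤ S ≤ d` with `d = max C D`, so it is invertible, which
makes `θ*` onto, and `T = S^{-1/2}` turns `{f_j}` into the normalized tight frame `{T f_j}`.
The self-adjoint contraction `a = S^{1/2} / √d` is the mean of the two unitaries
`a ± i √(1 - a²)`, so `f_j = √d · a T f_j = (√d / 2) (u T f_j + u* T f_j)`, and unitaries map
normalized tight frames to normalized tight frames.
-/

open scoped InnerProductSpace

theorem Unitary.mul_mul_mul_star_mul_eq_one {R : Type*} [Monoid R] [StarMul R] {u s t : R}
    (hu : u ∈ unitary R) (h : t * s * star t = 1) : u * t * s * star (u * t) = 1 := by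
  rw [star_mul, show u * t * s * (star t * star u) = u * (t * s * star t) * star u by
    simp only [mul_assoc], h, mul_one, Unitary.mul_star_self_of_mem hu]

section CStarAlgebra

variable {A : Type*} [CStarAlgebra A]

theorem IsSelfAdjoint.exists_unitary_eq_half_smul_add_star {a : A} (ha : IsSelfAdjoint a)
    (hspec : spectrum ℝ a ⊆ Set.Icc (-1) 1) :
    ∃ u ∈ unitary A, a = (2⁻¹ : ℂ) • (u + star u) := by
  set k := cfc (fun x : ℝ => √(1 - x ^ 2)) a
  have hk : IsSelfAdjoint k := cfc_predicate _ a
  have hak : Commute a k := by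
    simpa only [cfc_id ℝ a] using cfc_commute_cfc (R := ℝ) id (fun x : ℝ => √(1 - x ^ 2)) a
  have hkk : k * k = 1 - a * a := by
    rw [← cfc_mul .., ← sq, ← cfc_pow_id (R := ℝ) a 2, ← cfc_one ℝ a, ← cfc_sub ..]
    refine cfc_congr fun x hx => ?_
    obtain ⟨h₁, h₂⟩ := hspec hx
    rw [Real.mul_self_sqrt (by nlinarith), Pi.one_apply]
  have hstar : star (a + Complex.I • k) = a - Complex.I • k := by
    simp [ha.star_eq, hk.star_eq, sub_eq_add_neg]
  refine ⟨a + Complex.I • k, Unitary.mem_iff.mpr ⟨?_, ?_⟩, ?_⟩ <;> rw [hstar]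
  all_goals simp only [add_mul, sub_mul, mul_add, mul_sub, smul_mul_assoc, mul_smul_comm,
    smul_add, smul_sub, smul_smul, Complex.I_mul_I, hak.eq, hkk]
  all_goals module

variable {s : A} (hs : IsSelfAdjoint s)
include hs

theorem IsSelfAdjoint.cfc_inv_sqrt_mul_mul_star_self (hpos : ∀ x ∈ spectrum ℝ s, 0 < x) :
    cfc (fun x : ℝ => (√x)⁻¹) s * s * star (cfc (fun x : ℝ => (√x)⁻¹) s) = 1 := by
  have hcont : ContinuousOn (fun x : ℝ => (√x)⁻¹) (spectrum ℝ s) :=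
    Real.continuous_sqrt.continuousOn.inv₀ fun x hx => (Real.sqrt_pos.2 (hpos x hx)).ne'
  rw [(cfc_predicate _ s : IsSelfAdjoint (cfc _ s)).star_eq]
  nth_rw 2 [← cfc_id' ℝ s]
  rw [← cfc_mul .., ← cfc_mul .., ← cfc_one ℝ s]
  refine cfc_congr fun x hx => ?_
  have := Real.sqrt_pos.2 (hpos x hx)
  rw [Pi.one_apply]
  field_simp
  exact (Real.sq_sqrt (hpos x hx).le).symm

theorem IsSelfAdjoint.cfc_sqrt_div_mul_cfc_inv_sqrt (hpos : ∀ x ∈ spectrum ℝ s, 0 < x) (d : ℝ) :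
    cfc (fun x : ℝ => √x / √d) s * cfc (fun x : ℝ => (√x)⁻¹) s = algebraMap ℝ A (√d)⁻¹ := by
  have hcont : ContinuousOn (fun x : ℝ => (√x)⁻¹) (spectrum ℝ s) :=
    Real.continuous_sqrt.continuousOn.inv₀ fun x hx => (Real.sqrt_pos.2 (hpos x hx)).ne'
  rw [← cfc_mul .., ← cfc_const (√d)⁻¹ s]
  refine cfc_congr fun x hx => ?_
  have := Real.sqrt_pos.2 (hpos x hx)
  field_simp

theorem IsSelfAdjoint.spectrum_cfc_sqrt_div_subset {d : ℝ} (hspec : spectrum ℝ s ⊆ Set.Icc 0 d) :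
    spectrum ℝ (cfc (fun x : ℝ => √x / √d) s) ⊆ Set.Icc (-1) 1 := by
  rw [cfc_map_spectrum ..]
  rintro _ ⟨x, hx, rfl⟩
  have hx₀ : 0 ≤ √x / √d := by positivity
  exact ⟨by linarith, div_le_one_of_le₀ (Real.sqrt_le_sqrt (hspec hx).2) (by positivity)⟩

theorem IsSelfAdjoint.exists_mul_mul_star_eq_one_and_smul_add_eq_one {d : ℝ} (hd : 0 < d)
    (hspec : spectrum ℝ s ⊆ Set.Ioc 0 d) :
    ∃ m₁ m₂ : A, m₁ * s * star m₁ = 1 ∧ m₂ * s * star m₂ = 1 ∧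
      ((√d / 2 : ℝ) : ℂ) • (m₁ + m₂) = 1 := by
  have hpos : ∀ x ∈ spectrum ℝ s, 0 < x := fun x hx => (hspec hx).1
  obtain ⟨u, hu, hua⟩ := (cfc_predicate _ s : IsSelfAdjoint (cfc (fun x : ℝ => √x / √d) s))
    |>.exists_unitary_eq_half_smul_add_star
      (hs.spectrum_cfc_sqrt_div_subset (hspec.trans Set.Ioc_subset_Icc_self))
  set t := cfc (fun x : ℝ => (√x)⁻¹) s
  have htst : t * s * star t = 1 := hs.cfc_inv_sqrt_mul_mul_star_self hpos
  refine ⟨u * t, star u * t, Unitary.mul_mul_mul_star_mul_eq_one hu htst,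
    Unitary.mul_mul_mul_star_mul_eq_one (Unitary.star_mem hu) htst, ?_⟩
  have hd' : (√d : ℂ) ≠ 0 := by exact_mod_cast (Real.sqrt_pos.2 hd).ne'
  have h2 : u + star u = (2 : ℂ) • cfc (fun x : ℝ => √x / √d) s := by
    rw [hua, smul_smul]; norm_num
  rw [← add_mul, h2, smul_mul_assoc, hs.cfc_sqrt_div_mul_cfc_inv_sqrt hpos,
    Algebra.algebraMap_eq_smul_one, ← Complex.coe_smul, smul_smul, smul_smul]
  convert one_smul ℂ (1 : A)
  push_cast
  field_simp

end CStarAlgebra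

theorem lp.norm_sq_eq_tsum_norm_sq {ι : Type*} {E : ι → Type*} [∀ i, NormedAddCommGroup (E i)]
    (x : lp E 2) : ‖x‖ ^ 2 = ∑' i, ‖x i‖ ^ 2 := by
  simpa [Real.rpow_two] using lp.norm_rpow_eq_tsum (by norm_num : 0 < (2 : ENNReal).toReal) x

open RCLike

namespace ContinuousLinearMap

section RCLike

variable {𝕜 H E : Type*} [RCLike 𝕜] [NormedAddCommGroup H] [InnerProductSpace 𝕜 H]
  [CompleteSpace H] [NormedAddCommGroup E] [InnerProductSpace 𝕜 E] [CompleteSpace E]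

theorem le_of_forall_re_inner_le {T T' : H →L[𝕜] H} (hT : IsSelfAdjoint T)
    (hT' : IsSelfAdjoint T') (h : ∀ x, re ⟪T x, x⟫_𝕜 ≤ re ⟪T' x, x⟫_𝕜) : T ≤ T' := by
  rw [le_def, isPositive_def']
  refine ⟨hT'.sub hT, fun x => ?_⟩
  simpa [reApplyInnerSelf, inner_sub_left] using h x

theorem surjective_adjoint_of_forall_le_norm_apply_sq {θ : H →L[𝕜] E} {C : ℝ} (hC : 0 < C)
    (h : ∀ v, C * ‖v‖ ^ 2 ≤ ‖θ v‖ ^ 2) : Function.Surjective (adjoint θ) := by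
  have hunit : IsUnit (adjoint θ ∘L θ) :=
    isUnit_of_forall_le_norm_inner_map _ (c := ⟨C, hC.le⟩) hC fun x => calc
      ‖x‖ ^ 2 * C ≤ re ⟪(adjoint θ ∘L θ) x, x⟫_𝕜 := by
        rw [← apply_norm_sq_eq_inner_adjoint_left, mul_comm]
        exact h x
      _ ≤ ‖⟪(adjoint θ ∘L θ) x, x⟫_𝕜‖ := re_le_norm _
  have hsurj := (isUnit_iff_bijective.mp hunit).surjective
  rw [coe_comp] at hsurj
  exact hsurj.of_comp

end RCLike

theorem spectrum_adjoint_comp_self_subset_Icc {H E : Type*} [NormedAddCommGroup H]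
    [InnerProductSpace ℂ H] [CompleteSpace H] [NormedAddCommGroup E] [InnerProductSpace ℂ E]
    [CompleteSpace E] {θ : H →L[ℂ] E} {C D : ℝ}
    (hlow : ∀ v, C * ‖v‖ ^ 2 ≤ ‖θ v‖ ^ 2) (hup : ∀ v, ‖θ v‖ ^ 2 ≤ D * ‖v‖ ^ 2) :
    spectrum ℝ (adjoint θ ∘L θ) ⊆ Set.Icc C D := by
  have hS := (isPositive_adjoint_comp_self θ).isSelfAdjoint
  have hr (r : ℝ) : IsSelfAdjoint (algebraMap ℝ (H →L[ℂ] H) r) := .algebraMap _ (.all r)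
  have hre (r : ℝ) (v : H) : re ⟪algebraMap ℝ (H →L[ℂ] H) r v, v⟫_ℂ = r * ‖v‖ ^ 2 := by
    simp [← Complex.ofReal_pow]
  intro x hx
  refine ⟨(algebraMap_le_iff_le_spectrum hS).mp ?_ x hx,
    (le_algebraMap_iff_spectrum_le hS).mp ?_ x hx⟩
  · refine le_of_forall_re_inner_le (hr C) hS fun v => ?_
    rw [hre, ← apply_norm_sq_eq_inner_adjoint_left]
    exact hlow v
  · refine le_of_forall_re_inner_le hS (hr D) fun v => ?_
    rw [hre, ← apply_norm_sq_eq_inner_adjoint_left]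
    exact hup v

end ContinuousLinearMap

open ContinuousLinearMap

section AnalysisOperator

variable {𝕜 H ι : Type*} [RCLike 𝕜] [NormedAddCommGroup H] [InnerProductSpace 𝕜 H]
  {f : ι → H} {θ : H →L[𝕜] lp (fun _ : ι => 𝕜) 2}

theorem norm_apply_sq_eq_tsum_norm_inner_sq (hθ : ∀ v j, θ v j = ⟪f j, v⟫_𝕜) (v : H) :
    ‖θ v‖ ^ 2 = ∑' j, ‖⟪v, f j⟫_𝕜‖ ^ 2 := by
  simp_rw [lp.norm_sq_eq_tsum_norm_sq, hθ, norm_inner_symm]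

theorem tsum_norm_inner_apply_sq_eq_norm_sq [CompleteSpace H] (hθ : ∀ v j, θ v j = ⟪f j, v⟫_𝕜)
    {m : H →L[𝕜] H} (hm : m * (adjoint θ ∘L θ) * star m = 1) (v : H) :
    ∑' j, ‖⟪v, m (f j)⟫_𝕜‖ ^ 2 = ‖v‖ ^ 2 := calc
  ∑' j, ‖⟪v, m (f j)⟫_𝕜‖ ^ 2 = ‖θ (adjoint m v)‖ ^ 2 := by
    simp_rw [norm_apply_sq_eq_tsum_norm_inner_sq hθ, adjoint_inner_left]
  _ = re ⟪(m * (adjoint θ ∘L θ) * star m) v, v⟫_𝕜 := by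
    rw [apply_norm_sq_eq_inner_adjoint_left, adjoint_inner_right, star_eq_adjoint]
    rfl
  _ = ‖v‖ ^ 2 := by rw [hm, one_apply_eq_self, inner_self_eq_norm_sq]

end AnalysisOperator

/-- For a frame `{f_j}` of a Hilbert space `H` with frame transform `θ : H → ℓ²`, the adjoint
`θ*` is surjective, and `{f_j}` is a multiple of the sum of two normalized tight frames:
`f_j = c (g_j + h_j)` with `{g_j}`, `{h_j}` normalized tight frames of `H`. -/
theorem stmt15 {H : Type*} [NormedAddCommGroup H] [InnerProductSpace ℂ H] [CompleteSpace H]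
    (f : ℕ → H) (C D : ℝ) (hC : 0 < C)
    (hframe : ∀ v : H, C * ‖v‖ ^ 2 ≤ ∑' j, ‖⟪v, f j⟫_ℂ‖ ^ 2 ∧
      ∑' j, ‖⟪v, f j⟫_ℂ‖ ^ 2 ≤ D * ‖v‖ ^ 2)
    (θ : H →L[ℂ] lp (fun _ : ℕ => ℂ) 2) (hθ : ∀ v j, θ v j = ⟪f j, v⟫_ℂ) :
    Function.Surjective (ContinuousLinearMap.adjoint θ) ∧
      ∃ c : ℝ, 0 < c ∧ ∃ g h : ℕ → H,
        (∀ v : H, ∑' j, ‖⟪v, g j⟫_ℂ‖ ^ 2 = ‖v‖ ^ 2) ∧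
        (∀ v : H, ∑' j, ‖⟪v, h j⟫_ℂ‖ ^ 2 = ‖v‖ ^ 2) ∧
        ∀ j, f j = (c : ℂ) • (g j + h j) := by
  simp_rw [← norm_apply_sq_eq_tsum_norm_inner_sq hθ] at hframe
  have hd : 0 < max C D := hC.trans_le (le_max_left C D)
  have hspec : spectrum ℝ (adjoint θ ∘L θ) ⊆ Set.Ioc 0 (max C D) :=
    (spectrum_adjoint_comp_self_subset_Icc (fun v => (hframe v).1) (fun v => (hframe v).2)).trans
      (Set.Icc_subset_Ioc hC (le_max_right C D))
  obtain ⟨m₁, m₂, h₁, h₂, hsum⟩ := (isPositive_adjoint_comp_self θ).isSelfAdjoint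
    |>.exists_mul_mul_star_eq_one_and_smul_add_eq_one hd hspec
  refine ⟨surjective_adjoint_of_forall_le_norm_apply_sq hC fun v => (hframe v).1,
    √(max C D) / 2, by positivity, fun j => m₁ (f j), fun j => m₂ (f j),
    tsum_norm_inner_apply_sq_eq_norm_sq hθ h₁, tsum_norm_inner_apply_sq_eq_norm_sq hθ h₂,
    fun j => ?_⟩
  simpa using congr($hsum (f j)).symm
end

section
/- Let H = ℓ²(ℕ). Every frame {f_j} of H is a multiple of the sum of an orthonormal basis and a Riesz basis: there exist c > 0, an orthonormal basis {u_j}, and a Riesz basis {r_j} of H such that f_j = c(u_j + r_j) for all j. -/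
open scoped InnerProductSpace lp

/-!
The synthesis operator `S`, the adjoint of the analysis operator `v ↦ (⟪f j, v⟫)ⱼ`, is bounded by
the upper frame bound and sends the standard basis vector `e j` of `ℓ²` to `f j`. For any
`c > ‖S‖` the Neumann series makes `c⁻¹ S - 1 = -(1 - c⁻¹ S)` invertible, so
`f j = S (e j) = c (e j + (c⁻¹ S - 1) (e j))`.
-/

theorem exists_unit_eq_smul_one_add {𝕜 A : Type*} [NormedField 𝕜] [NormedRing A]
    [NormedAlgebra 𝕜 A] [HasSummableGeomSeries A] {a : A} {c : 𝕜} (h : ‖a‖ < ‖c‖) :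
    ∃ u : Aˣ, a = c • (1 + (u : A)) := by
  have hc : c ≠ 0 := norm_pos_iff.mp ((norm_nonneg a).trans_lt h)
  have hsmall : ‖c⁻¹ • a‖ < 1 := by
    rwa [norm_smul, norm_inv, inv_mul_lt_iff₀ (norm_pos_iff.mpr hc), mul_one]
  refine ⟨-Units.oneSub (c⁻¹ • a) hsmall, ?_⟩
  rw [Units.val_neg, Units.val_oneSub, neg_sub, add_sub_cancel, smul_smul, mul_inv_cancel₀ hc,
    one_smul]

theorem lp.norm_sq_eq_tsum {ι : Type*} {G : ι → Type*} [∀ i, NormedAddCommGroup (G i)]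
    (x : lp G 2) : ‖x‖ ^ 2 = ∑' i, ‖x i‖ ^ 2 := by
  simpa [Real.rpow_two] using lp.norm_rpow_eq_tsum (p := 2) (by norm_num) x

theorem HilbertBasis.default_apply {𝕜 ι : Type*} [RCLike 𝕜] [DecidableEq ι] (i : ι) :
    (default : HilbertBasis ι 𝕜 ℓ²(ι, 𝕜)) i = lp.single 2 i 1 :=
  (HilbertBasis.repr_symm_single _ i).symm

section Bessel

variable {𝕜 E ι : Type*} [RCLike 𝕜] [NormedAddCommGroup E] [InnerProductSpace 𝕜 E] {f : ι → E}

theorem summable_inner_of_lower_frame_bound {C : ℝ} (hC : 0 < C) {v : E}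
    (h : C * ‖v‖ ^ 2 ≤ ∑' j, ‖⟪v, f j⟫_𝕜‖ ^ 2) : Summable fun j => ‖⟪v, f j⟫_𝕜‖ ^ 2 := by
  rcases eq_or_ne v 0 with rfl | hv
  · simp
  by_contra hns
  rw [tsum_eq_zero_of_not_summable hns] at h
  exact h.not_gt (mul_pos hC (pow_pos (norm_pos_iff.mpr hv) 2))

theorem memℓp_inner_of_summable {v : E} (hv : Summable fun j => ‖⟪v, f j⟫_𝕜‖ ^ 2) :
    Memℓp (fun j => ⟪f j, v⟫_𝕜) 2 :=
  memℓp_gen (by simpa [Real.rpow_two, norm_inner_symm] using hv)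

variable (hsum : ∀ v, Summable fun j => ‖⟪v, f j⟫_𝕜‖ ^ 2) {D : ℝ}
  (hbound : ∀ v, ∑' j, ‖⟪v, f j⟫_𝕜‖ ^ 2 ≤ D * ‖v‖ ^ 2)

noncomputable def besselAnalysis : E →L[𝕜] ℓ²(ι, 𝕜) :=
  LinearMap.mkContinuous
    { toFun v := ⟨fun j => ⟪f j, v⟫_𝕜, memℓp_inner_of_summable (hsum v)⟩
      map_add' v w := lp.ext <| funext fun j => inner_add_right _ _ _
      map_smul' a v := lp.ext <| funext fun j => inner_smul_right _ _ _ }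
    √D fun v => by
      rw [← Real.sqrt_sq (norm_nonneg _), ← Real.sqrt_sq (norm_nonneg v),
        ← Real.sqrt_mul' _ (sq_nonneg _)]
      refine Real.sqrt_le_sqrt ?_
      simpa [lp.norm_sq_eq_tsum, norm_inner_symm] using hbound v

theorem adjoint_besselAnalysis_single [CompleteSpace E] [DecidableEq ι] (j : ι) :
    (besselAnalysis hsum hbound).adjoint (lp.single 2 j 1) = f j := by
  refine ext_inner_left 𝕜 fun w => ?_
  rw [ContinuousLinearMap.adjoint_inner_right, lp.inner_single_right]
  simp [besselAnalysis, RCLike.inner_apply]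

end Bessel

/-- Every frame `{f_j}` of `H = ℓ²` is a multiple of the sum of an orthonormal basis and a
Riesz basis: `f_j = c (u_j + r_j)` with `{u_j}` an orthonormal basis and `r_j = T (b_j)` for a
bounded invertible operator `T` and an orthonormal basis `{b_j}`. -/
theorem stmt18 (f : ℕ → lp (fun _ : ℕ => ℂ) 2) (C D : ℝ) (hC : 0 < C)
    (hframe : ∀ v : lp (fun _ : ℕ => ℂ) 2, C * ‖v‖ ^ 2 ≤ ∑' j, ‖⟪v, f j⟫_ℂ‖ ^ 2 ∧
      ∑' j, ‖⟪v, f j⟫_ℂ‖ ^ 2 ≤ D * ‖v‖ ^ 2) :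
    ∃ c : ℝ, 0 < c ∧
      ∃ (u : HilbertBasis ℕ ℂ (lp (fun _ : ℕ => ℂ) 2))
        (T : lp (fun _ : ℕ => ℂ) 2 ≃L[ℂ] lp (fun _ : ℕ => ℂ) 2)
        (b : HilbertBasis ℕ ℂ (lp (fun _ : ℕ => ℂ) 2)),
        ∀ j, f j = (c : ℂ) • (u j + T (b j)) := by
  have hsum v := summable_inner_of_lower_frame_bound hC (hframe v).1
  set S := (besselAnalysis hsum fun v => (hframe v).2).adjoint
  have hS : ∀ j, S (lp.single 2 j 1) = f j := adjoint_besselAnalysis_single hsum _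
  obtain ⟨c, hc, hSc⟩ : ∃ c : ℝ, 0 < c ∧ ‖S‖ < ‖(c : ℂ)‖ :=
    ⟨‖S‖ + 1, by positivity, by rw [Complex.norm_real, Real.norm_of_nonneg (by positivity)]; simp⟩
  obtain ⟨R, hR⟩ := exists_unit_eq_smul_one_add hSc
  refine ⟨c, hc, default, .ofUnit R, default, fun j => ?_⟩
  rw [HilbertBasis.default_apply, ← hS, hR]
  rfl
end
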